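/- Let U be an n×n unitary matrix, let r = (m_1,…,m_{d1}) and c = (n_1,…,n_{d2}) be partitions of n, partition the columns of U consecutively into blocks U_i with m_i columns (according to r) and into blocks V_j with n_j columns (according to c), and set A = span{U_iU_i*}, B = span{V_jV_j*} (both algebras built from the same unitary U). Then A and B are quasiorthogonal if and only if one of r, c is the trivial partition (n) (i.e., one of A, B equals ℂI_n). Moreover, if r = c = (m_1,…,m_{d1}) then Q(A,B) = d1. -/
import Mathlib


open Matrix

/-- Two subsets of `M_n(ℂ)` are *quasiorthogonal* if `Tr(AB) = Tr(A)Tr(B)/n` for all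
`A ∈ 𝒜`, `B ∈ ℬ`. -/
def Quasiorthogonal {n : ℕ} (𝒜 ℬ : Set (Matrix (Fin n) (Fin n) ℂ)) : Prop :=
  ∀ A ∈ 𝒜, ∀ B ∈ ℬ, (A * B).trace = A.trace * B.trace / (n : ℂ)

/-- The index in `Fin n` of column `b` of the `i`-th block, when the `n` columns are
partitioned consecutively into `d` blocks of sizes `m 0, m 1, …, m (d-1)`. -/
def colIdx {n d : ℕ} (m : Fin d → ℕ) (h : ∑ i, m i = n) (i : Fin d) (b : Fin (m i)) :
    Fin n := by
  refine ⟨(∑ j ∈ Finset.univ.filter (fun j => j < i), m j) + b.1, ?_⟩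
  have hb := b.2
  have hnotmem : i ∉ Finset.univ.filter (fun j => j < i) := by simp
  have hle : ∑ j ∈ insert i (Finset.univ.filter (fun j => j < i)), m j ≤ ∑ j, m j :=
    Finset.sum_le_sum_of_subset (Finset.subset_univ _)
  rw [Finset.sum_insert hnotmem] at hle
  omega

/-- `U_i`: the `n × m_i` submatrix of `U` consisting of the `i`-th consecutive block of
columns. -/
def colBlock {n d : ℕ} (U : Matrix (Fin n) (Fin n) ℂ) (m : Fin d → ℕ)
    (h : ∑ i, m i = n) (i : Fin d) : Matrix (Fin n) (Fin (m i)) ℂ :=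
  fun a b => U a (colIdx m h i b)

/-- `P_i = U_i U_i^*`. -/
noncomputable def blockProj {n d : ℕ} (U : Matrix (Fin n) (Fin n) ℂ) (m : Fin d → ℕ)
    (h : ∑ i, m i = n) (i : Fin d) : Matrix (Fin n) (Fin n) ℂ :=
  colBlock U m h i * (colBlock U m h i)ᴴ

/- ### auxiliary machinery -/


def blkStart {d : ℕ} (m : Fin d → ℕ) (i : Fin d) : ℕ :=
  ∑ j ∈ Finset.univ.filter (fun j => j < i), m j

lemma colIdx_val {n d : ℕ} (m : Fin d → ℕ) (h : ∑ i, m i = n) (i : Fin d) (b : Fin (m i)) :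
    (colIdx m h i b).val = blkStart m i + b.val := rfl

lemma blkStart_add_le {n d : ℕ} (m : Fin d → ℕ) (h : ∑ i, m i = n) (i : Fin d) :
    blkStart m i + m i ≤ n := by
  have hnotmem : i ∉ Finset.univ.filter (fun j => j < i) := by simp
  have hle : ∑ j ∈ insert i (Finset.univ.filter (fun j => j < i)), m j ≤ ∑ j, m j :=
    Finset.sum_le_sum_of_subset (Finset.subset_univ _)
  rw [Finset.sum_insert hnotmem] at hle
  unfold blkStart
  omega

lemma blkStart_lt_add {d : ℕ} (m : Fin d → ℕ) {i j : Fin d} (hij : i < j) :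
    blkStart m i + m i ≤ blkStart m j := by
  have hsub : insert i (Finset.univ.filter (fun l => l < i)) ⊆
      Finset.univ.filter (fun l => l < j) := by
    intro l hl
    simp only [Finset.mem_insert, Finset.mem_filter, Finset.mem_univ, true_and] at *
    rcases hl with rfl | hl
    · exact hij
    · exact hl.trans hij
  have hnotmem : i ∉ Finset.univ.filter (fun l => l < i) := by simp
  have := Finset.sum_le_sum_of_subset (f := m) hsub
  rw [Finset.sum_insert hnotmem] at this
  unfold blkStart
  omega

lemma blkStart_zero {d : ℕ} (m : Fin d → ℕ) (hd : 0 < d) : blkStart m ⟨0, hd⟩ = 0 := by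
  unfold blkStart
  rw [Finset.filter_false_of_mem, Finset.sum_empty]
  intro j _
  simp [Fin.lt_def]

def inBlk {d : ℕ} (m : Fin d → ℕ) (i : Fin d) (k : ℕ) : Prop :=
  blkStart m i ≤ k ∧ k < blkStart m i + m i

instance {d : ℕ} (m : Fin d → ℕ) (i : Fin d) (k : ℕ) : Decidable (inBlk m i k) := by
  unfold inBlk; infer_instance

lemma card_filter_ico {n a b : ℕ} (hb : b ≤ n) :
    (Finset.univ.filter (fun k : Fin n => a ≤ k.val ∧ k.val < b)).card = b - a := by
  rw [show b - a = (Finset.Ico a b).card by rw [Nat.card_Ico]]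
  refine Finset.card_bij' (fun k _ => k.val) (fun x hx => ⟨x, by
    have := Finset.mem_Ico.mp hx; omega⟩) ?_ ?_ ?_ ?_
  · intro k hk
    simp only [Finset.mem_filter, Finset.mem_univ, true_and] at hk
    exact Finset.mem_Ico.mpr hk
  · intro x hx
    have := Finset.mem_Ico.mp hx
    simp only [Finset.mem_filter, Finset.mem_univ, true_and]
    exact this
  · intro k _; rfl
  · intro x _; rfl

lemma card_filter_inBlk {n d : ℕ} (m : Fin d → ℕ) (hm : ∑ i, m i = n) (i : Fin d) :
    (Finset.univ.filter (fun k : Fin n => inBlk m i k.val)).card = m i := by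
  have hle := blkStart_add_le m hm i
  have := card_filter_ico (n := n) (a := blkStart m i) (b := blkStart m i + m i) hle
  unfold inBlk
  omega

lemma sum_colIdx {n d : ℕ} (m : Fin d → ℕ) (h : ∑ i, m i = n) (i : Fin d)
    (f : Fin n → ℂ) :
    ∑ b : Fin (m i), f (colIdx m h i b)
      = ∑ k ∈ Finset.univ.filter (fun k : Fin n => inBlk m i k.val), f k := by
  have hle := blkStart_add_le m h i
  refine Finset.sum_bij' (fun b _ => colIdx m h i b)
    (fun k hk => ⟨k.val - blkStart m i, by
      simp only [Finset.mem_filter, Finset.mem_univ, true_and] at hk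
      unfold inBlk at hk; omega⟩) ?_ ?_ ?_ ?_ ?_
  · intro b _
    simp only [Finset.mem_filter, Finset.mem_univ, true_and]
    have hb := b.2
    unfold inBlk
    rw [colIdx_val]
    omega
  · intro k hk; exact Finset.mem_univ _
  · intro b _
    apply Fin.ext
    simp [colIdx_val]
  · intro k hk
    simp only [Finset.mem_filter, Finset.mem_univ, true_and] at hk
    unfold inBlk at hk
    apply Fin.ext
    rw [colIdx_val]
    simp only
    omega
  · intro b _; rfl

lemma blockProj_eq {n d : ℕ} (U : Matrix (Fin n) (Fin n) ℂ) (m : Fin d → ℕ)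
    (h : ∑ i, m i = n) (i : Fin d) :
    blockProj U m h i
      = U * Matrix.diagonal (fun k : Fin n => if inBlk m i k.val then (1:ℂ) else 0) * Uᴴ := by
  ext a b
  rw [Matrix.mul_apply]
  simp only [Matrix.mul_diagonal, Matrix.conjTranspose_apply]
  rw [blockProj, Matrix.mul_apply]
  simp only [colBlock, Matrix.conjTranspose_apply]
  rw [sum_colIdx m h i (fun k => U a k * star (U b k))]
  rw [Finset.sum_filter]
  apply Finset.sum_congr rfl
  intro k _
  by_cases hk : inBlk m i k.val <;> simp [hk]

lemma trace_blockProj_mul {n d1 d2 : ℕ} (U : Matrix (Fin n) (Fin n) ℂ)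
    (hU : U ∈ Matrix.unitaryGroup (Fin n) ℂ)
    (m : Fin d1 → ℕ) (hm : ∑ i, m i = n) (c : Fin d2 → ℕ) (hc : ∑ j, c j = n)
    (i : Fin d1) (j : Fin d2) :
    (blockProj U m hm i * blockProj U c hc j).trace
      = ((Finset.univ.filter
          (fun k : Fin n => inBlk m i k.val ∧ inBlk c j k.val)).card : ℂ) := by
  have hU' : Uᴴ * U = 1 := Matrix.mem_unitaryGroup_iff'.mp hU
  rw [blockProj_eq, blockProj_eq]
  set D := Matrix.diagonal (fun k : Fin n => if inBlk m i k.val then (1:ℂ) else 0)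
  set E := Matrix.diagonal (fun k : Fin n => if inBlk c j k.val then (1:ℂ) else 0)
  have : U * D * Uᴴ * (U * E * Uᴴ) = U * (D * E) * Uᴴ := by
    rw [show U * D * Uᴴ * (U * E * Uᴴ) = U * D * (Uᴴ * U) * E * Uᴴ by
      simp only [Matrix.mul_assoc], hU']
    simp [Matrix.mul_assoc]
  rw [this, Matrix.trace_mul_cycle, ← Matrix.mul_assoc, hU', Matrix.one_mul]
  rw [show D * E = Matrix.diagonal (fun k : Fin n =>
      if inBlk m i k.val ∧ inBlk c j k.val then (1:ℂ) else 0) by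
    rw [Matrix.diagonal_mul_diagonal]
    apply congrArg Matrix.diagonal
    funext k
    by_cases h1 : inBlk m i k.val <;> by_cases h2 : inBlk c j k.val <;> simp [h1, h2]]
  rw [Matrix.trace_diagonal, Finset.sum_boole]

lemma trace_blockProj {n d : ℕ} (U : Matrix (Fin n) (Fin n) ℂ)
    (hU : U ∈ Matrix.unitaryGroup (Fin n) ℂ)
    (m : Fin d → ℕ) (hm : ∑ i, m i = n) (i : Fin d) :
    (blockProj U m hm i).trace = (m i : ℂ) := by
  have hU' : Uᴴ * U = 1 := Matrix.mem_unitaryGroup_iff'.mp hU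
  rw [blockProj_eq, Matrix.trace_mul_cycle, hU', Matrix.one_mul,
    Matrix.trace_diagonal, Finset.sum_boole]
  rw [card_filter_inBlk m hm i]

lemma quasi_of_gen {n : ℕ} (S T : Set (Matrix (Fin n) (Fin n) ℂ))
    (h : ∀ A ∈ S, ∀ B ∈ T, (A * B).trace = A.trace * B.trace / (n : ℂ)) :
    Quasiorthogonal (Submodule.span ℂ S : Set (Matrix (Fin n) (Fin n) ℂ))
      (Submodule.span ℂ T : Set (Matrix (Fin n) (Fin n) ℂ)) := by
  intro A hA B hB
  rw [SetLike.mem_coe] at hA hB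
  induction hA using Submodule.span_induction with
  | mem x hx =>
    induction hB using Submodule.span_induction with
    | mem y hy => exact h x hx y hy
    | zero => simp
    | add y z _ _ hy hz => rw [mul_add, Matrix.trace_add, hy, hz, Matrix.trace_add]; ring
    | smul a y _ hy =>
      rw [mul_smul_comm, Matrix.trace_smul, hy, Matrix.trace_smul, smul_eq_mul, smul_eq_mul]
      ring
  | zero => simp
  | add x y _ _ hx hy => rw [add_mul, Matrix.trace_add, hx, hy, Matrix.trace_add]; ring
  | smul a x _ hx =>
    rw [smul_mul_assoc, Matrix.trace_smul, hx, Matrix.trace_smul, smul_eq_mul, smul_eq_mul]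
    ring

lemma dim_eq_one {d n : ℕ} (hn : 0 < n) (c : Fin d → ℕ) (hc : ∑ j, c j = n)
    (hcpos : ∀ j, 0 < c j) (hd : 0 < d) (h0 : c ⟨0, hd⟩ = n) : d = 1 := by
  have key : ∀ j : Fin d, j = ⟨0, hd⟩ := by
    intro j
    by_contra hj
    have hmem : (⟨0, hd⟩ : Fin d) ∈ (Finset.univ.erase j) :=
      Finset.mem_erase.mpr ⟨fun h => hj h.symm, Finset.mem_univ _⟩
    have h1 : c j + ∑ l ∈ Finset.univ.erase j, c l = n := by
      rw [Finset.add_sum_erase _ c (Finset.mem_univ j)]; exact hc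
    have h2 : c ⟨0, hd⟩ ≤ ∑ l ∈ Finset.univ.erase j, c l :=
      Finset.single_le_sum (fun l _ => Nat.zero_le _) hmem
    have := hcpos j
    omega
  have : Fintype.card (Fin d) = 1 :=
    Fintype.card_eq_one_iff.mpr ⟨⟨0, hd⟩, key⟩
  simpa using this


/-- For a single unitary `U` and partitions `r = (m_1,…,m_{d1})`,
`c = (p_1,…,p_{d2})` of `n`, with `𝒜 = span {U_i U_i^*}` (blocks by `r`) and
`ℬ = span {V_j V_j^*}` (blocks by `c`, same `U`): `𝒜` and `ℬ` are quasiorthogonal iff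
one of `r`, `c` is the trivial partition `(n)`; moreover, if `r = c` then
`Q(𝒜,ℬ) = d1`. -/
theorem same_unitary_quasiorthogonal_iff {n d1 d2 : ℕ} (hn : 0 < n)
    (U : Matrix (Fin n) (Fin n) ℂ) (hU : U ∈ Matrix.unitaryGroup (Fin n) ℂ)
    (m : Fin d1 → ℕ) (hm : ∑ i, m i = n) (hmpos : ∀ i, 0 < m i)
    (c : Fin d2 → ℕ) (hc : ∑ j, c j = n) (hcpos : ∀ j, 0 < c j) :
    (Quasiorthogonal
        (Submodule.span ℂ (Set.range (blockProj U m hm)) : Set (Matrix (Fin n) (Fin n) ℂ))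
        (Submodule.span ℂ (Set.range (blockProj U c hc)) : Set (Matrix (Fin n) (Fin n) ℂ)) ↔
      d1 = 1 ∨ d2 = 1) ∧
    (∀ (h : d1 = d2), (∀ i : Fin d1, m i = c (Fin.cast h i)) →
      ∑ i : Fin d1, ∑ j : Fin d2,
          ‖((((Real.sqrt (m i))⁻¹ : ℝ) : ℂ) • blockProj U m hm i *
            ((((Real.sqrt (c j))⁻¹ : ℝ) : ℂ) • blockProj U c hc j)).trace‖ ^ 2
        = (d1 : ℝ)) := by
  have hnC : (n : ℂ) ≠ 0 := Nat.cast_ne_zero.mpr hn.ne'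
  have hd1 : 0 < d1 := by
    by_contra h
    push_neg at h
    interval_cases d1
    simp at hm
    omega
  have hd2 : 0 < d2 := by
    by_contra h
    push_neg at h
    interval_cases d2
    simp at hc
    omega
  constructor
  · constructor
    · -- forward
      intro hQ
      set i0 : Fin d1 := ⟨0, hd1⟩
      set j0 : Fin d2 := ⟨0, hd2⟩
      have hA : blockProj U m hm i0 ∈
          (Submodule.span ℂ (Set.range (blockProj U m hm)) : Set (Matrix (Fin n) (Fin n) ℂ)) :=
        Submodule.subset_span (Set.mem_range_self i0)
      have hB : blockProj U c hc j0 ∈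
          (Submodule.span ℂ (Set.range (blockProj U c hc)) : Set (Matrix (Fin n) (Fin n) ℂ)) :=
        Submodule.subset_span (Set.mem_range_self j0)
      have key := hQ _ hA _ hB
      rw [trace_blockProj_mul U hU m hm c hc, trace_blockProj U hU m hm,
        trace_blockProj U hU c hc] at key
      have hs1 := blkStart_zero m hd1
      have hs2 := blkStart_zero c hd2
      have hm0 : m i0 ≤ n := by have := blkStart_add_le m hm i0; omega
      have hc0 : c j0 ≤ n := by have := blkStart_add_le c hc j0; omega
      have hmin : min (m i0) (c j0) ≤ n := le_trans (min_le_left _ _) hm0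
      have hset : Finset.univ.filter (fun k : Fin n => inBlk m i0 k.val ∧ inBlk c j0 k.val)
          = Finset.univ.filter (fun k : Fin n =>
              0 ≤ k.val ∧ k.val < min (m i0) (c j0)) := by
        apply Finset.filter_congr
        intro k _
        unfold inBlk
        rw [hs1, hs2]
        omega
      rw [hset, card_filter_ico hmin, Nat.sub_zero] at key
      -- key : (min (m i0) (c j0) : ℂ) = m i0 * c j0 / n
      have keyN : (min (m i0) (c j0)) * n = m i0 * c j0 := by
        have : ((min (m i0) (c j0) : ℕ) * n : ℂ) = ((m i0 * c j0 : ℕ) : ℂ) := by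
          push_cast
          rw [key]
          field_simp
        exact_mod_cast this
      have hm0p := hmpos i0
      have hc0p := hcpos j0
      rcases le_total (m i0) (c j0) with hle | hle
      · right
        have : c j0 = n := by
          rw [min_eq_left hle] at keyN
          exact (Nat.eq_of_mul_eq_mul_left hm0p keyN).symm
        exact dim_eq_one hn c hc hcpos hd2 this
      · left
        have : m i0 = n := by
          rw [min_eq_right hle] at keyN
          have h2 : c j0 * n = c j0 * m i0 := by rw [keyN, mul_comm]
          exact (Nat.eq_of_mul_eq_mul_left hc0p h2).symm
        exact dim_eq_one hn m hm hmpos hd1 this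
    · -- backward
      intro hcase
      apply quasi_of_gen
      rintro A ⟨i, rfl⟩ B ⟨j, rfl⟩
      rw [trace_blockProj_mul U hU m hm c hc, trace_blockProj U hU m hm,
        trace_blockProj U hU c hc]
      rcases hcase with h1 | h2
      · subst h1
        have hi : i = ⟨0, Nat.one_pos⟩ := by
          apply Fin.ext
          omega
        subst hi
        have hmn : m ⟨0, Nat.one_pos⟩ = n := by
          rw [← hm, Fin.sum_univ_one]
          exact congrArg m (Fin.ext rfl)
        have hset : Finset.univ.filter
              (fun k : Fin n => inBlk m ⟨0, Nat.one_pos⟩ k.val ∧ inBlk c j k.val)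
            = Finset.univ.filter (fun k : Fin n => inBlk c j k.val) := by
          apply Finset.filter_congr
          intro k _
          have hs1 := blkStart_zero m Nat.one_pos
          have hk := k.2
          unfold inBlk
          rw [hs1, hmn]
          have h2 := blkStart_add_le c hc j
          omega
        rw [hset, card_filter_inBlk c hc j, hmn]
        field_simp
      · subst h2
        have hj : j = ⟨0, Nat.one_pos⟩ := by
          apply Fin.ext
          omega
        subst hj
        have hcn : c ⟨0, Nat.one_pos⟩ = n := by
          rw [← hc, Fin.sum_univ_one]
          exact congrArg c (Fin.ext rfl)
        have hset : Finset.univ.filter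
              (fun k : Fin n => inBlk m i k.val ∧ inBlk c ⟨0, Nat.one_pos⟩ k.val)
            = Finset.univ.filter (fun k : Fin n => inBlk m i k.val) := by
          apply Finset.filter_congr
          intro k _
          have hs2 := blkStart_zero c Nat.one_pos
          have hk := k.2
          unfold inBlk
          rw [hs2, hcn]
          have h2 := blkStart_add_le m hm i
          omega
        rw [hset, card_filter_inBlk m hm i, hcn]
        field_simp
  · -- part 2
    intro h hsame
    subst h
    have hmc : ∀ i : Fin d1, m i = c i := fun i => hsame i
    have hstart : ∀ i : Fin d1, blkStart m i = blkStart c i := by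
      intro i
      exact Finset.sum_congr rfl (fun j _ => hmc j)
    have htr : ∀ i j : Fin d1,
        (blockProj U m hm i * blockProj U c hc j).trace
          = if i = j then (m i : ℂ) else 0 := by
      intro i j
      rw [trace_blockProj_mul U hU m hm c hc]
      by_cases hij : i = j
      · subst hij
        rw [if_pos rfl]
        have hset : Finset.univ.filter
              (fun k : Fin n => inBlk m i k.val ∧ inBlk c i k.val)
            = Finset.univ.filter (fun k : Fin n => inBlk m i k.val) := by
          apply Finset.filter_congr
          intro k _
          unfold inBlk
          rw [← hstart, ← hmc]
          omega
        rw [hset, card_filter_inBlk m hm i]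
      · rw [if_neg hij]
        have hset : Finset.univ.filter
              (fun k : Fin n => inBlk m i k.val ∧ inBlk c j k.val) = ∅ := by
          apply Finset.filter_false_of_mem
          intro k _
          unfold inBlk
          rw [← hstart, ← hmc]
          rcases (Fin.lt_or_lt_of_ne hij) with hlt | hlt
          · have := blkStart_lt_add m hlt
            omega
          · have := blkStart_lt_add m hlt
            omega
        rw [hset]
        simp
    have hterm : ∀ i j : Fin d1,
        ‖((((Real.sqrt (m i))⁻¹ : ℝ) : ℂ) • blockProj U m hm i *
            ((((Real.sqrt (c j))⁻¹ : ℝ) : ℂ) • blockProj U c hc j)).trace‖ ^ 2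
          = if i = j then (1:ℝ) else 0 := by
      intro i j
      rw [Matrix.smul_mul, Matrix.mul_smul, smul_smul, Matrix.trace_smul, htr i j]
      by_cases hij : i = j
      · subst hij
        rw [if_pos rfl, if_pos rfl, smul_eq_mul, ← hmc i]
        have hmpos' : (0:ℝ) < (m i : ℝ) := by exact_mod_cast hmpos i
        have hr : ((Real.sqrt (m i))⁻¹ * (Real.sqrt (m i))⁻¹ * ((m i : ℕ) : ℝ)) = 1 := by
          rw [← mul_inv, Real.mul_self_sqrt hmpos'.le, inv_mul_cancel₀ hmpos'.ne']
        have hcast : (((Real.sqrt (m i))⁻¹ : ℝ) : ℂ) * (((Real.sqrt (m i))⁻¹ : ℝ) : ℂ)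
              * ((m i : ℕ) : ℂ)
            = ((((Real.sqrt (m i))⁻¹ * (Real.sqrt (m i))⁻¹ * ((m i : ℕ) : ℝ)) : ℝ) : ℂ) := by
          push_cast
          ring
        rw [hcast, hr]
        norm_num
      · rw [if_neg hij, if_neg hij]
        simp
    calc ∑ i : Fin d1, ∑ j : Fin d1,
          ‖((((Real.sqrt (m i))⁻¹ : ℝ) : ℂ) • blockProj U m hm i *
            ((((Real.sqrt (c j))⁻¹ : ℝ) : ℂ) • blockProj U c hc j)).trace‖ ^ 2
        = ∑ i : Fin d1, ∑ j : Fin d1, if i = j then (1:ℝ) else 0 := by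
          exact Finset.sum_congr rfl fun i _ => Finset.sum_congr rfl fun j _ => hterm i j
      _ = (d1 : ℝ) := by
          simp [Finset.sum_ite_eq]
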